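/- arXiv:2401.14600 — 2 statements merged into one kernel-verified Lean document; each statement's English description precedes it below -/
import Mathlib

section
/- For every predictor π, the set of functions f ∈ ω^ω predicted by π is a meager subset of the Baire space ω^ω. -/
/-- The predictor `(D, π)` predicts `f` if `f(n) = π_n(f↾n)` for all but finitely many
`n ∈ D`. -/
def Predicts (D : Set ℕ) (π : (n : ℕ) → (Fin n → ℕ) → ℕ) (f : ℕ → ℕ) : Prop :=
  {n | n ∈ D ∧ f n ≠ π n (fun i => f i)}.Finite

/-- For every predictor, the set of functions it predicts is meager in Baire space. -/
theorem stmt_6 (D : Set ℕ) (hD : D.Infinite) (π : (n : ℕ) → (Fin n → ℕ) → ℕ) :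
    IsMeagre {f : ℕ → ℕ | Predicts D π f} := by
  set A : ℕ → Set (ℕ → ℕ) := fun m =>
    {f | ∀ n, n ∈ D → m ≤ n → f n = π n (fun i => f i)} with hA
  have hsub : {f : ℕ → ℕ | Predicts D π f} ⊆ ⋃ m, A m := by
    intro f hf
    obtain ⟨b, hb⟩ := (hf : Set.Finite _).bddAbove
    refine Set.mem_iUnion.2 ⟨b + 1, fun n hn hmn => ?_⟩
    by_contra hne
    have : n ≤ b := hb ⟨hn, hne⟩
    omega
  refine IsMeagre.mono hsub (isMeagre_iUnion fun m => ?_)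
  -- each A m is closed with empty interior
  have hclosed : IsClosed (A m) := by
    have : A m = ⋂ n ∈ {n | n ∈ D ∧ m ≤ n}, {f : ℕ → ℕ | f n = π n (fun i => f i)} := by
      ext f
      simp only [hA, Set.mem_setOf_eq, Set.mem_iInter]
      exact ⟨fun h n hn => h n hn.1 hn.2, fun h n h1 h2 => h n ⟨h1, h2⟩⟩
    rw [this]
    refine isClosed_biInter fun n _ => isClosed_eq (continuous_apply n) ?_
    exact (continuous_of_discreteTopology :
      Continuous (π n)).comp (continuous_pi fun i => continuous_apply (i : ℕ))
  have hint : interior (A m) = ∅ := by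
    by_contra h
    obtain ⟨f, hf⟩ := Set.nonempty_iff_ne_empty.2 h
    obtain ⟨I, u, hu, hpi⟩ := isOpen_pi_iff.1 isOpen_interior f hf
    obtain ⟨n, hnD, hn⟩ := hD.exists_gt (max m (I.sup id))
    have hnm : m ≤ n := le_trans (le_max_left _ _) hn.le
    set g : ℕ → ℕ := Function.update f n (π n (fun i => f i) + 1) with hg
    have hgI : g ∈ (I : Set ℕ).pi u := by
      intro i hi
      have : i ≠ n := by
        have : i ≤ I.sup id := Finset.le_sup (f := id) hi
        omega
      simp only [hg, Function.update_of_ne this]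
      exact (hu i hi).2
    have hgA : g ∈ A m := interior_subset (hpi hgI)
    have h1 : g n = π n (fun i => g i) := hgA n hnD hnm
    have h2 : (fun i : Fin n => g i) = fun i : Fin n => f i := by
      funext i
      exact Function.update_of_ne (by omega : (i : ℕ) ≠ n) _ f
    rw [h2] at h1
    simp [hg, Function.update_self] at h1
  have : IsNowhereDense (A m) := (hclosed.isNowhereDense_iff).2 hint
  exact isMeagre_iff_countable_union_isNowhereDense.2
    ⟨{A m}, by simpa using this, Set.countable_singleton _, by simp⟩
end

section
/- In eventually different forcing, the ultrafilter limit satisfies the n-fold compatibility property: given sequences q̄^j = ⟨q_m^j⟩_{m<ω} in Q_{s,k} for j < n, and a condition r extending lim^D q̄^j for all j < n, the set {m < ω : r and all q_m^j for j < n have a common extension} belongs to D. -/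
/-- A condition of eventually different forcing `𝔼`: a triple `(s,k,φ)` with
`s ∈ ω^{<ω}`, `k < ω` and `φ : ω → [ω]^{≤k}`. -/
structure EDCond where
  s : List ℕ
  k : ℕ
  φ : ℕ → Finset ℕ
  hφ : ∀ i, (φ i).card ≤ k

/-- The order on `𝔼`: `e' ≤ e` iff `s' ⊇ s`, `k' ≥ k`, `φ'(i) ⊇ φ(i)` for all `i`, and
`s'(i) ∉ φ(i)` for all `i ∈ dom(s') \ dom(s)`. -/
def EDle (e' e : EDCond) : Prop :=
  e.s <+: e'.s ∧ e.k ≤ e'.k ∧ (∀ i, e.φ i ⊆ e'.φ i) ∧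
    ∀ i, e.s.length ≤ i → i < e'.s.length → e'.s.getD i 0 ∉ e.φ i

/-!
The common extension is `r` with each `φ(i)` enlarged by `⋃_j φ_m^j(i)`. It lies below every
`q_m^j` as soon as the finitely many new values `r.s(i)`, `|s| ≤ i < |r.s|`, avoid `φ_m^j(i)`.
Since `r ≤ lim^D q̄^j`, each value `r.s(i)` lies outside the limit set `φ^∞(i)`, i.e. it avoids
`φ_m^j(i)` for `D`-almost all `m`; finitely many such requirements still hold on a set in `D`.
-/

namespace EDCond

variable {ι : Type*} [Fintype ι]

def amalgam (r : EDCond) {k : ℕ} (ψ : ι → ℕ → Finset ℕ) (hψ : ∀ j i, (ψ j i).card ≤ k) :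
    EDCond where
  s := r.s
  k := r.k + Fintype.card ι * k
  φ i := r.φ i ∪ Finset.univ.biUnion fun j => ψ j i
  hφ i := calc
    _ ≤ (r.φ i).card + (Finset.univ.biUnion fun j => ψ j i).card := Finset.card_union_le _ _
    _ ≤ r.k + ∑ j : ι, (ψ j i).card := by gcongr; exacts [r.hφ i, Finset.card_biUnion_le]
    _ ≤ r.k + Fintype.card ι * k := by
      gcongr
      exact (Finset.sum_le_sum fun j _ => hψ j i).trans_eq (by simp)

variable (r : EDCond) {k : ℕ} (ψ : ι → ℕ → Finset ℕ) (hψ : ∀ j i, (ψ j i).card ≤ k)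

theorem amalgam_le : EDle (r.amalgam ψ hψ) r :=
  ⟨List.prefix_refl _, Nat.le_add_right _ _, fun _ => Finset.subset_union_left,
    fun _ h₁ h₂ => absurd h₂ (not_lt.mpr h₁)⟩

theorem amalgam_le_of_fresh {q : EDCond} (j : ι) (hs : q.s <+: r.s) (hk : q.k ≤ r.k)
    (hφ : ∀ i, q.φ i ⊆ ψ j i)
    (hfresh : ∀ i, q.s.length ≤ i → i < r.s.length → r.s.getD i 0 ∉ q.φ i) :
    EDle (r.amalgam ψ hψ) q :=
  ⟨hs, hk.trans (Nat.le_add_right _ _),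
    fun i => (hφ i).trans <| Finset.subset_union_right.trans' <|
      Finset.subset_biUnion_of_mem (fun j => ψ j i) (Finset.mem_univ j),
    hfresh⟩

end EDCond

theorem Ultrafilter.eventually_notMem_of_notMem_limit {α β : Type*} {D : Ultrafilter α}
    {φ : α → Set β} {F : Set β} (hlim : F = {c | {m | c ∈ φ m} ∈ D}) {c : β} (hc : c ∉ F) :
    ∀ᶠ m in (D : Filter α), c ∉ φ m :=
  Ultrafilter.compl_mem_iff_notMem.mpr (by rwa [hlim] at hc)

theorem stmt_13_general (D : Ultrafilter ℕ)
    (s : List ℕ) (k n : ℕ) (φs : Fin n → ℕ → ℕ → Finset ℕ)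
    (hφ : ∀ j m i, (φs j m i).card ≤ k)
    (F : Fin n → ℕ → Finset ℕ) (hF : ∀ j i, (F j i).card ≤ k)
    (hlim : ∀ j i, (F j i : Set ℕ) = {c | {m | c ∈ φs j m i} ∈ D})
    (r : EDCond) (hr : ∀ j, EDle r ⟨s, k, F j, hF j⟩) :
    {m | ∃ c : EDCond, EDle c r ∧ ∀ j, EDle c ⟨s, k, φs j m, hφ j m⟩} ∈ D := by
  have hfresh : ∀ᶠ m in (D : Filter ℕ), ∀ j, ∀ i ∈ Finset.Ico s.length r.s.length,
      r.s.getD i 0 ∉ φs j m i := by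
    refine Filter.eventually_all.2 fun j => (Filter.eventually_all_finset _).2 fun i hi => ?_
    obtain ⟨h₁, h₂⟩ := Finset.mem_Ico.1 hi
    exact Ultrafilter.eventually_notMem_of_notMem_limit (φ := fun m => ↑(φs j m i)) (hlim j i)
      (by exact_mod_cast (hr j).2.2.2 i h₁ h₂)
  filter_upwards [hfresh] with m hm
  exact ⟨r.amalgam (fun j => φs j m) (hφ · m), r.amalgam_le _ _, fun j =>
    r.amalgam_le_of_fresh _ _ j (hr j).1 (hr j).2.1 (fun _ => subset_rfl)
      fun i h₁ h₂ => hm j i (Finset.mem_Ico.mpr ⟨h₁, h₂⟩)⟩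

/-- The `n`-fold compatibility property of ultrafilter limits in eventually different
forcing: given sequences `q̄^j = ⟨(s,k,φs j m) : m < ω⟩` in `Q_{s,k}` for `j < n`, with
`D`-limits `(s,k,F j)` (where `c ∈ F j i ↔ {m : c ∈ φs j m i} ∈ D`), and a condition `r`
extending every `lim^D q̄^j`, the set
`{m : r and all q_m^j (j < n) have a common extension}` belongs to `D`. -/
theorem stmt_13 (D : Ultrafilter ℕ) (hD : ∀ A : Set ℕ, A.Finite → A ∉ D)
    (s : List ℕ) (k n : ℕ) (φs : Fin n → ℕ → ℕ → Finset ℕ)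
    (hφ : ∀ j m i, (φs j m i).card ≤ k)
    (F : Fin n → ℕ → Finset ℕ) (hF : ∀ j i, (F j i).card ≤ k)
    (hlim : ∀ j i, (F j i : Set ℕ) = {c | {m | c ∈ φs j m i} ∈ D})
    (r : EDCond) (hr : ∀ j, EDle r ⟨s, k, F j, hF j⟩) :
    {m | ∃ c : EDCond, EDle c r ∧ ∀ j, EDle c ⟨s, k, φs j m, hφ j m⟩} ∈ D :=
  stmt_13_general D s k n φs hφ F hF hlim r hr
end
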